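/- arXiv:1905.06069 — 2 statements merged into one kernel-verified Lean document; each statement's English description precedes it below -/
import Mathlib

section
/- Let D = {(s₊,s₋) ∈ ℂ² : Re s₊ > 0 and Re s₋ > 0} and let f : D → ℂ be holomorphic in each variable separately and satisfy |f(s₊,s₋)| ≤ C / (|s₊|² |s₋|²) on D for some constant C > 0. Define g(s₊,s₋) = i ∫₀^∞ f(s₊ + iσ, s₋ − iσ) dσ. Then this integral converges absolutely for every (s₊,s₋) ∈ D, g is holomorphic in each variable separately on D, and ( ∂g/∂s₊ − ∂g/∂s₋ )(s₊,s₋) = − f(s₊,s₋) for all (s₊,s₋) ∈ D. -/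
open MeasureTheory Filter Set

/-- `g(s₊,s₋) = i ∫₀^∞ f(s₊ + iσ, s₋ - iσ) dσ`. -/
noncomputable def gOff (f : ℂ → ℂ → ℂ) (sp sm : ℂ) : ℂ :=
  Complex.I * ∫ σ in Set.Ioi (0:ℝ),
    f (sp + (σ : ℂ) * Complex.I) (sm - (σ : ℂ) * Complex.I)

/-!
A separately holomorphic, locally bounded function of two complex variables is jointly
continuous (Cauchy's estimate makes it locally Lipschitz in the first variable, uniformly in the
second), and then Cauchy's integral formula shows that its partial derivatives are jointly
continuous too. Hence `f` is differentiable along the path `σ ↦ (s₊ + iσ, s₋ - iσ)`, with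
derivative `i (∂₊f - ∂₋f)`. The decay bound dominates `f` along the path by a multiple of
`(1 + σ²)⁻¹`, uniformly for `(s₊, s₋)` near a given point, so `g` may be differentiated under the
integral sign, and `∂₊g - ∂₋g = ∫₀^∞ (d/dσ) f(s₊ + iσ, s₋ - iσ) dσ = -f(s₊, s₋)` by the fundamental
theorem of calculus, since `f` tends to `0` along the path.
-/

open Metric Topology Function

def LocallyBoundedOn {X F : Type*} [TopologicalSpace X] [Norm F] (g : X → F) (s : Set X) :
    Prop :=
  ∀ x ∈ s, ∃ M, ∀ᶠ y in 𝓝 x, ‖g y‖ ≤ M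

theorem locallyBoundedOn_of_norm_le {X F : Type*} [TopologicalSpace X] [Norm F] {g : X → F}
    {β : X → ℝ} {s : Set X} (hs : IsOpen s) (hβ : ContinuousOn β s)
    (hg : ∀ x ∈ s, ‖g x‖ ≤ β x) : LocallyBoundedOn g s := fun x hx =>
  ⟨β x + 1, by
    filter_upwards [hs.mem_nhds hx,
      (hβ.continuousAt (hs.mem_nhds hx)).eventually (gt_mem_nhds (lt_add_one _))] with y hy hβy
    exact (hg y hy).trans hβy.le⟩

section OneVariable

variable {E : Type*} [NormedAddCommGroup E] [NormedSpace ℂ E]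

theorem norm_deriv_le_of_closedBall_subset {g : ℂ → E} {s : Set ℂ} {ζ : ℂ} {ρ M : ℝ}
    (hρ : 0 < ρ) (hg : DifferentiableOn ℂ g s) (hM : ∀ x ∈ s, ‖g x‖ ≤ M)
    (hs : closedBall ζ ρ ⊆ s) : ‖deriv g ζ‖ ≤ M / ρ :=
  Complex.norm_deriv_le_of_forall_mem_sphere_norm_le hρ
    (DifferentiableOn.diffContOnCl (by rw [closure_ball ζ hρ.ne']; exact hg.mono hs))
    fun ξ hξ => hM ξ (hs (sphere_subset_closedBall hξ))

theorem norm_sub_le_of_differentiableOn_closedBall {g : ℂ → E} {c z : ℂ} {r M : ℝ}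
    (hr : 0 < r) (hg : DifferentiableOn ℂ g (closedBall c r))
    (hM : ∀ ζ ∈ closedBall c r, ‖g ζ‖ ≤ M) (hz : z ∈ ball c (r / 2)) :
    ‖g z - g c‖ ≤ M / (r / 2) * ‖z - c‖ := by
  refine Convex.norm_image_sub_le_of_norm_deriv_le (fun ζ hζ => ?_)
    (fun ζ hζ => norm_deriv_le_of_closedBall_subset (half_pos hr) hg hM
      (closedBall_subset_closedBall' (by rw [mem_ball] at hζ; linarith)))
    (convex_ball c _) (mem_ball_self (half_pos hr)) hz
  exact hg.differentiableAt
    (closedBall_mem_nhds_of_mem (ball_subset_ball (half_le_self hr.le) hζ))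

theorem hasDerivAt_integral_of_differentiableOn_ball {α : Type*} [MeasurableSpace α]
    {μ : Measure α} {G : ℂ → α → E} {x₀ : ℂ} {r : ℝ} (hr : 0 < r) {b : α → ℝ}
    (hb : Integrable b μ) (hG_meas : ∀ x ∈ ball x₀ r, AEStronglyMeasurable (G x) μ)
    (hG'_meas : AEStronglyMeasurable (fun a => deriv (G · a) x₀) μ)
    (hG_diff : ∀ a, DifferentiableOn ℂ (G · a) (ball x₀ r))
    (hG_le : ∀ a, ∀ x ∈ ball x₀ r, ‖G x a‖ ≤ b a) :
    Integrable (fun a => deriv (G · a) x₀) μ ∧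
      HasDerivAt (fun x => ∫ a, G x a ∂μ) (∫ a, deriv (G · a) x₀ ∂μ) x₀ := by
  refine hasDerivAt_integral_of_dominated_loc_of_deriv_le (ball_mem_nhds x₀ (half_pos hr))
    (F' := fun x a => deriv (G · a) x) (bound := fun a => b a / (r / 2))
    (by filter_upwards [ball_mem_nhds x₀ hr] using hG_meas)
    (hb.mono' (hG_meas x₀ (mem_ball_self hr)) (ae_of_all _ fun a => hG_le a x₀ (mem_ball_self hr)))
    hG'_meas (ae_of_all _ fun a x hx => ?_) (hb.div_const _) (ae_of_all _ fun a x hx => ?_)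
  · exact norm_deriv_le_of_closedBall_subset (half_pos hr) (hG_diff a) (hG_le a)
      (closedBall_subset_ball' (by rw [mem_ball] at hx; linarith))
  · exact ((hG_diff a).differentiableAt (isOpen_ball.mem_nhds
      (ball_subset_ball (half_le_self hr.le) hx))).hasDerivAt

end OneVariable

section SeparatelyHolomorphic

variable {E X : Type*} [NormedAddCommGroup E] [NormedSpace ℂ E] [TopologicalSpace X]
  {U : Set ℂ} {V : Set X} {f : ℂ → X → E}

theorem exists_closedBall_prod_subset {P : ℂ × X → Prop} {z₀ : ℂ} {w₀ : X}
    (h : ∀ᶠ q in 𝓝 (z₀, w₀), P q) :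
    ∃ r > 0, ∃ N ∈ 𝓝 w₀, ∀ z ∈ closedBall z₀ r, ∀ w ∈ N, P (z, w) := by
  obtain ⟨⟨r, N⟩, ⟨hr, hN⟩, hsub⟩ :=
    (nhds_basis_closedBall.prod_nhds (𝓝 w₀).basis_sets).mem_iff.1 h
  exact ⟨r, hr, N, hN, fun z hz w hw => hsub (mk_mem_prod hz hw)⟩

theorem continuousOn_uncurry_of_differentiableOn_left (hU : IsOpen U) (hV : IsOpen V)
    (hf₁ : ∀ w ∈ V, DifferentiableOn ℂ (f · w) U) (hf₂ : ∀ z ∈ U, ContinuousOn (f z) V)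
    (hbdd : LocallyBoundedOn (↿f) (U ×ˢ V)) : ContinuousOn (↿f) (U ×ˢ V) := by
  rintro ⟨z₀, w₀⟩ ⟨hz₀, hw₀⟩
  obtain ⟨M, hM⟩ := hbdd _ ⟨hz₀, hw₀⟩
  obtain ⟨r, hr, N, hN, hbox⟩ := exists_closedBall_prod_subset
    (hM.and ((hU.prod hV).mem_nhds ⟨hz₀, hw₀⟩))
  -- Cauchy's estimate makes `f · w` Lipschitz near `z₀`, uniformly for `w` near `w₀`.
  have hlip : ∀ᶠ q in 𝓝 (z₀, w₀), ‖f q.1 q.2 - f z₀ q.2‖ ≤ M / (r / 2) * ‖q.1 - z₀‖ := by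
    filter_upwards [prod_mem_nhds (ball_mem_nhds z₀ (half_pos hr)) hN] with ⟨z, w⟩ ⟨hz, hw⟩
    exact norm_sub_le_of_differentiableOn_closedBall hr
      ((hf₁ w (hbox z₀ (mem_closedBall_self hr.le) w hw).2.2).mono
        fun ζ hζ => (hbox ζ hζ w hw).2.1)
      (fun ζ hζ => (hbox ζ hζ w hw).1) hz
  have hsmall : Tendsto (fun q : ℂ × X => f q.1 q.2 - f z₀ q.2) (𝓝 (z₀, w₀)) (𝓝 0) := by
    refine squeeze_zero_norm' hlip ?_
    have : Continuous fun q : ℂ × X => M / (r / 2) * ‖q.1 - z₀‖ := by fun_prop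
    simpa using this.tendsto (z₀, w₀)
  have hslice : Tendsto (fun q : ℂ × X => f z₀ q.2) (𝓝 (z₀, w₀)) (𝓝 (f z₀ w₀)) :=
    ((hf₂ z₀ hz₀).continuousAt (hV.mem_nhds hw₀)).tendsto.comp continuousAt_snd
  refine ContinuousAt.continuousWithinAt ?_
  simpa [ContinuousAt, HasUncurry.uncurry] using hsmall.add hslice

theorem continuousAt_cderiv_uncurry [FirstCountableTopology X] {ρ M : ℝ} (hρ : 0 < ρ)
    {p₀ : ℂ × X} (hcont : ∀ θ : ℝ, ContinuousAt (↿f) (circleMap p₀.1 ρ θ, p₀.2))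
    (hslice : ∀ᶠ p in 𝓝 p₀, Continuous fun θ : ℝ => f (circleMap p.1 ρ θ) p.2)
    (hM : ∀ᶠ p in 𝓝 p₀, ∀ θ : ℝ, ‖f (circleMap p.1 ρ θ) p.2‖ ≤ M) :
    ContinuousAt (fun p : ℂ × X => Complex.cderiv ρ (f · p.2) p.1) p₀ := by
  simp only [Complex.cderiv, circleIntegral, deriv_circleMap, circleMap_sub_center]
  refine ContinuousAt.const_smul (intervalIntegral.continuousAt_of_dominated_interval
    (bound := fun _ => M / ρ) ?_ ?_ intervalIntegrable_const (ae_of_all _ fun θ _ => ?_)) _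
  · filter_upwards [hslice] with p hp
    have hne : ∀ θ : ℝ, circleMap 0 ρ θ ^ 2 ≠ 0 := fun θ =>
      pow_ne_zero 2 (circleMap_ne_center hρ.ne')
    exact (((continuous_circleMap 0 ρ).mul continuous_const).smul
      ((((continuous_circleMap 0 ρ).pow 2).inv₀ hne).smul hp)).aestronglyMeasurable
  · filter_upwards [hM] with p hp
    refine ae_of_all _ fun θ _ => ?_
    rw [norm_smul, norm_smul, norm_mul, norm_inv, norm_pow, norm_circleMap_zero, Complex.norm_I,
      abs_of_pos hρ, mul_one]
    calc ρ * ((ρ ^ 2)⁻¹ * ‖f (circleMap p.1 ρ θ) p.2‖) ≤ ρ * ((ρ ^ 2)⁻¹ * M) := by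
          gcongr; exact hp θ
      _ = M / ρ := by field_simp
  · have hpath : Continuous fun p : ℂ × X => (circleMap p.1 ρ θ, p.2) := by
      unfold circleMap; fun_prop
    exact ((ContinuousAt.comp (g := ↿f) (x := p₀) (hcont θ) hpath.continuousAt).const_smul
      _).const_smul _

theorem continuousOn_uncurry_deriv_left [CompleteSpace E] [FirstCountableTopology X]
    (hU : IsOpen U) (hV : IsOpen V)
    (hf₁ : ∀ w ∈ V, DifferentiableOn ℂ (f · w) U) (hf₂ : ∀ z ∈ U, ContinuousOn (f z) V)
    (hbdd : LocallyBoundedOn (↿f) (U ×ˢ V)) :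
    ContinuousOn (fun p : ℂ × X => deriv (f · p.2) p.1) (U ×ˢ V) := by
  have hcont := continuousOn_uncurry_of_differentiableOn_left hU hV hf₁ hf₂ hbdd
  rintro ⟨z₀, w₀⟩ ⟨hz₀, hw₀⟩
  obtain ⟨M, hM⟩ := hbdd _ ⟨hz₀, hw₀⟩
  obtain ⟨r, hr, N, hN, hbox⟩ := exists_closedBall_prod_subset
    (hM.and ((hU.prod hV).mem_nhds ⟨hz₀, hw₀⟩))
  set ρ := r / 2 with hρ_def
  have hρ : 0 < ρ := half_pos hr
  have hnear : ∀ᶠ p in 𝓝 (z₀, w₀), p.1 ∈ ball z₀ ρ ∧ p.2 ∈ N :=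
    prod_mem_nhds (ball_mem_nhds z₀ hρ) hN
  have hcirc : ∀ z ∈ ball z₀ ρ, closedBall z ρ ⊆ closedBall z₀ r := fun z hz =>
    closedBall_subset_closedBall' (by rw [mem_ball] at hz; linarith)
  have hsphere : ∀ p : ℂ × X, p.1 ∈ ball z₀ ρ → p.2 ∈ N → ∀ θ : ℝ,
      circleMap p.1 ρ θ ∈ U ∧ ‖f (circleMap p.1 ρ θ) p.2‖ ≤ M := fun p hz hw θ =>
    have h := hbox _ (hcirc _ hz (sphere_subset_closedBall (circleMap_mem_sphere _ hρ.le θ))) _ hw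
    ⟨h.2.1, h.1⟩
  have hdiff : ∀ w ∈ N, DifferentiableOn ℂ (f · w) U := fun w hw =>
    hf₁ w (hbox z₀ (mem_closedBall_self hr.le) w hw).2.2
  have heq : (fun p : ℂ × X => Complex.cderiv ρ (f · p.2) p.1) =ᶠ[𝓝 (z₀, w₀)]
      fun p => deriv (f · p.2) p.1 := by
    filter_upwards [hnear] with p ⟨hz, hw⟩
    exact Complex.cderiv_eq_deriv hU (hdiff p.2 hw) hρ
      fun ζ hζ => (hbox ζ (hcirc _ hz hζ) _ hw).2.1
  refine ContinuousAt.continuousWithinAt ((continuousAt_congr heq).1 ?_)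
  refine continuousAt_cderiv_uncurry (M := M) hρ (fun θ => hcont.continuousAt ((hU.prod hV).mem_nhds
    ⟨(hsphere (z₀, w₀) (mem_ball_self hρ) (mem_of_mem_nhds hN) θ).1, hw₀⟩)) ?_ ?_
  · filter_upwards [hnear] with p ⟨hz, hw⟩
    exact (hdiff p.2 hw).continuousOn.comp_continuous (continuous_circleMap _ _)
      fun θ => (hsphere p hz hw θ).1
  · filter_upwards [hnear] with p ⟨hz, hw⟩
    exact fun θ => (hsphere p hz hw θ).2

end SeparatelyHolomorphic

section TwoVariables

variable {E : Type*} [NormedAddCommGroup E] [NormedSpace ℂ E] [CompleteSpace E]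
  {U V : Set ℂ} {f : ℂ → ℂ → E}

theorem continuousOn_uncurry_deriv_right (hU : IsOpen U) (hV : IsOpen V)
    (hf₁ : ∀ w ∈ V, ContinuousOn (f · w) U) (hf₂ : ∀ z ∈ U, DifferentiableOn ℂ (f z) V)
    (hbdd : LocallyBoundedOn (↿f) (U ×ˢ V)) :
    ContinuousOn (fun p : ℂ × ℂ => deriv (f p.1) p.2) (U ×ˢ V) := by
  have hbdd_swap : LocallyBoundedOn (↿fun w z => f z w) (V ×ˢ U) := fun q hq =>
    let ⟨M, hM⟩ := hbdd q.swap ⟨hq.2, hq.1⟩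
    ⟨M, (continuous_swap.tendsto q).eventually hM⟩
  exact (continuousOn_uncurry_deriv_left hV hU hf₂ hf₁ hbdd_swap).comp
    continuous_swap.continuousOn fun p hp => ⟨hp.2, hp.1⟩

open ContinuousLinearMap in
theorem hasStrictFDerivAt_uncurry_of_differentiableOn (hU : IsOpen U) (hV : IsOpen V)
    (hf₁ : ∀ w ∈ V, DifferentiableOn ℂ (f · w) U) (hf₂ : ∀ z ∈ U, DifferentiableOn ℂ (f z) V)
    (hbdd : LocallyBoundedOn (↿f) (U ×ˢ V)) {p : ℂ × ℂ} (hp : p ∈ U ×ˢ V) :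
    HasStrictFDerivAt (↿f) ((toSpanSingleton ℂ (deriv (f · p.2) p.1)).coprod
      (toSpanSingleton ℂ (deriv (f p.1) p.2))) p := by
  have hd₁ := continuousOn_uncurry_deriv_left hU hV hf₁ (fun z hz => (hf₂ z hz).continuousOn) hbdd
  have hd₂ := continuousOn_uncurry_deriv_right hU hV (fun w hw => (hf₁ w hw).continuousOn) hf₂ hbdd
  have hUV : U ×ˢ V ∈ 𝓝 p := (hU.prod hV).mem_nhds hp
  refine hasStrictFDerivAt_uncurry_coprod (f₁ := fun z w => toSpanSingleton ℂ (deriv (f · w) z))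
    (f₂ := fun z w => toSpanSingleton ℂ (deriv (f z) w)) ?_ ?_ ?_ ?_
  · filter_upwards [hUV] with q hq
    exact ((hf₁ q.2 hq.2).differentiableAt (hU.mem_nhds hq.1)).hasDerivAt.hasFDerivAt
  · filter_upwards [hUV] with q hq
    exact ((hf₂ q.1 hq.1).differentiableAt (hV.mem_nhds hq.2)).hasDerivAt.hasFDerivAt
  · exact toSpanSingletonCLE.continuous.continuousAt.comp (hd₁.continuousAt hUV)
  · exact toSpanSingletonCLE.continuous.continuousAt.comp (hd₂.continuousAt hUV)

theorem hasDerivAt_comp_line (hU : IsOpen U) (hV : IsOpen V)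
    (hf₁ : ∀ w ∈ V, DifferentiableOn ℂ (f · w) U) (hf₂ : ∀ z ∈ U, DifferentiableOn ℂ (f z) V)
    (hbdd : LocallyBoundedOn (↿f) (U ×ˢ V)) {z w u v : ℂ} {t₀ : ℝ}
    (hz : z + t₀ * u ∈ U) (hw : w + t₀ * v ∈ V) :
    HasDerivAt (fun t : ℝ => f (z + t * u) (w + t * v))
      (u • deriv (f · (w + t₀ * v)) (z + t₀ * u) + v • deriv (f (z + t₀ * u)) (w + t₀ * v))
      t₀ := by
  have hline : HasDerivAt (fun t : ℝ => (z + t * u, w + t * v)) (u, v) t₀ := by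
    have h := (hasDerivAt_id t₀).ofReal_comp
    exact ((h.mul_const u).const_add z).prodMk ((h.mul_const v).const_add w) |>.congr_deriv
      (by simp)
  have := ((hasStrictFDerivAt_uncurry_of_differentiableOn hU hV hf₁ hf₂ hbdd
    (p := (z + t₀ * u, w + t₀ * v)) ⟨hz, hw⟩).hasFDerivAt.restrictScalars ℝ).comp_hasDerivAt
      t₀ hline
  simpa [HasUncurry.uncurry, Function.comp_def] using this

end TwoVariables

def rightHalfPlane : Set ℂ := {z | 0 < z.re}

theorem isOpen_rightHalfPlane : IsOpen rightHalfPlane :=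
  isOpen_lt continuous_const Complex.continuous_re

section RightHalfPlane

open Complex

theorem one_add_sq_le_mul_norm_add_mul_I_sq {z : ℂ} {a K : ℝ} (ha : 0 < a) (hre : a ≤ z.re)
    (him : |z.im| ≤ K) (σ : ℝ) :
    1 + σ ^ 2 ≤ ((1 + 2 * K ^ 2) / a ^ 2 + 2) * ‖z + σ * I‖ ^ 2 := by
  have hnorm : ‖z + σ * I‖ ^ 2 = z.re ^ 2 + (z.im + σ) ^ 2 := by
    simp only [Complex.sq_norm, normSq_apply, add_re, add_im, mul_re, mul_im, ofReal_re,
      ofReal_im, I_re, I_im]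
    ring
  have hre2 : 1 + 2 * K ^ 2 ≤ (1 + 2 * K ^ 2) / a ^ 2 * z.re ^ 2 := by
    rw [div_mul_eq_mul_div, le_div_iff₀ (by positivity)]
    gcongr
  have him2 : z.im ^ 2 ≤ K ^ 2 := by rw [← sq_abs]; gcongr
  have hσ : σ ^ 2 ≤ 2 * (z.im + σ) ^ 2 + 2 * z.im ^ 2 := by nlinarith [sq_nonneg (2 * z.im + σ)]
  have hc : 0 ≤ (1 + 2 * K ^ 2) / a ^ 2 * (z.im + σ) ^ 2 := by positivity
  rw [hnorm]
  nlinarith [sq_nonneg z.re]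

theorem sub_lt_re_of_mem_ball {c x : ℂ} {r : ℝ} (hx : x ∈ ball c r) : c.re - r < x.re := by
  have := (abs_le.1 (abs_re_le_norm (x - c))).1
  rw [sub_re] at this
  linarith [mem_ball_iff_norm.1 hx]

theorem abs_im_lt_of_mem_ball {c x : ℂ} {r : ℝ} (hx : x ∈ ball c r) : |x.im| < |c.im| + r := by
  have := abs_im_le_norm (x - c)
  rw [sub_im] at this
  linarith [mem_ball_iff_norm.1 hx, abs_sub_abs_le_abs_sub x.im c.im]

variable {f : ℂ → ℂ → ℂ} {C : ℝ} {sp sm : ℂ}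

theorem exists_norm_comp_path_le
    (hbd : ∀ sp sm : ℂ, 0 < sp.re → 0 < sm.re → ‖f sp sm‖ ≤ C / (‖sp‖ ^ 2 * ‖sm‖ ^ 2))
    (hsp : 0 < sp.re) (hsm : 0 < sm.re) :
    ∃ r > 0, ∃ B, ∀ x ∈ ball sp r, ∀ y ∈ ball sm r, 0 < x.re ∧ 0 < y.re ∧
      ∀ σ : ℝ, ‖f (x + σ * I) (y - σ * I)‖ ≤ B * (1 + σ ^ 2)⁻¹ := by
  set a := min sp.re sm.re / 2 with ha_def
  have ha : 0 < a := by positivity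
  set A := (1 + 2 * (|sp.im| + a) ^ 2) / a ^ 2 + 2
  refine ⟨a, ha, C * A / a ^ 2, fun x hx y hy => ?_⟩
  have hxre : a ≤ x.re := by linarith [sub_lt_re_of_mem_ball hx, min_le_left sp.re sm.re]
  have hyre : a ≤ y.re := by linarith [sub_lt_re_of_mem_ball hy, min_le_right sp.re sm.re]
  refine ⟨ha.trans_le hxre, ha.trans_le hyre, fun σ => ?_⟩
  set z := x + σ * I
  set w := y - σ * I
  have hz : 0 < z.re := by simpa [z] using ha.trans_le hxre
  have hw : a ≤ w.re := by simpa [w] using hyre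
  have hwn : a ≤ ‖w‖ := hw.trans (re_le_norm w)
  have hzn : (1 + σ ^ 2) / A ≤ ‖z‖ ^ 2 := by
    rw [div_le_iff₀ (by positivity), mul_comm]
    exact one_add_sq_le_mul_norm_add_mul_I_sq ha hxre (abs_im_lt_of_mem_ball hx).le σ
  have hbound := hbd z w hz (ha.trans_le hw)
  have hC : 0 ≤ C := by
    have hD : 0 < ‖z‖ ^ 2 * ‖w‖ ^ 2 :=
      mul_pos (pow_pos (hz.trans_le (re_le_norm z)) 2) (pow_pos (ha.trans_le hwn) 2)
    simpa [le_div_iff₀ hD] using (norm_nonneg _).trans hbound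
  calc ‖f z w‖ ≤ C / (‖z‖ ^ 2 * ‖w‖ ^ 2) := hbound
    _ ≤ C / ((1 + σ ^ 2) / A * a ^ 2) := by gcongr
    _ = C * A / a ^ 2 * (1 + σ ^ 2)⁻¹ := by field_simp

theorem locallyBoundedOn_of_norm_le_div
    (hbd : ∀ sp sm : ℂ, 0 < sp.re → 0 < sm.re → ‖f sp sm‖ ≤ C / (‖sp‖ ^ 2 * ‖sm‖ ^ 2)) :
    LocallyBoundedOn (↿f) (rightHalfPlane ×ˢ rightHalfPlane) := by
  refine locallyBoundedOn_of_norm_le (isOpen_rightHalfPlane.prod isOpen_rightHalfPlane)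
    (β := fun q => C / (‖q.1‖ ^ 2 * ‖q.2‖ ^ 2)) ?_ fun q hq => hbd q.1 q.2 hq.1 hq.2
  refine continuousOn_const.div (by fun_prop) fun q hq => ?_
  have h₁ := (show (0 : ℝ) < q.1.re from hq.1).trans_le (re_le_norm q.1)
  have h₂ := (show (0 : ℝ) < q.2.re from hq.2).trans_le (re_le_norm q.2)
  positivity

theorem tendsto_comp_path_atTop
    (hbd : ∀ sp sm : ℂ, 0 < sp.re → 0 < sm.re → ‖f sp sm‖ ≤ C / (‖sp‖ ^ 2 * ‖sm‖ ^ 2))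
    (hsp : 0 < sp.re) (hsm : 0 < sm.re) :
    Tendsto (fun σ : ℝ => f (sp + σ * I) (sm - σ * I)) atTop (𝓝 0) := by
  obtain ⟨r, hr, B, hB⟩ := exists_norm_comp_path_le hbd hsp hsm
  refine squeeze_zero_norm (hB sp (mem_ball_self hr) sm (mem_ball_self hr)).2.2 ?_
  simpa using (tendsto_inv_atTop_zero.comp
    (tendsto_atTop_add_const_left _ 1 (tendsto_pow_atTop two_ne_zero))).const_mul B

theorem continuous_comp_path {F : Type*} [TopologicalSpace F] {g : ℂ × ℂ → F}
    (hg : ContinuousOn g (rightHalfPlane ×ˢ rightHalfPlane)) {x y : ℂ} (hx : 0 < x.re)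
    (hy : 0 < y.re) : Continuous fun σ : ℝ => g (x + σ * I, y - σ * I) :=
  hg.comp_continuous (by fun_prop) fun σ =>
    ⟨show 0 < (x + σ * I).re by simpa using hx, show 0 < (y - σ * I).re by simpa using hy⟩

structure SeparatelyHolomorphicWithDecay (f : ℂ → ℂ → ℂ) (C : ℝ) : Prop where
  differentiableOn_left : ∀ w ∈ rightHalfPlane, DifferentiableOn ℂ (f · w) rightHalfPlane
  differentiableOn_right : ∀ z ∈ rightHalfPlane, DifferentiableOn ℂ (f z) rightHalfPlane
  norm_le : ∀ z w : ℂ, 0 < z.re → 0 < w.re → ‖f z w‖ ≤ C / (‖z‖ ^ 2 * ‖w‖ ^ 2)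

namespace SeparatelyHolomorphicWithDecay

theorem differentiableAt_comp_path_left (hf : SeparatelyHolomorphicWithDecay f C)
    {x y : ℂ} (hx : 0 < x.re) (hy : 0 < y.re) (σ : ℝ) :
    DifferentiableAt ℂ (fun x' => f (x' + σ * I) (y - σ * I)) x :=
  ((hf.differentiableOn_left _ (show 0 < (y - σ * I).re by simpa using hy)).differentiableAt
    (isOpen_rightHalfPlane.mem_nhds (show 0 < (x + σ * I).re by simpa using hx))).comp x
    (differentiableAt_id.add_const _)

theorem differentiableAt_comp_path_right (hf : SeparatelyHolomorphicWithDecay f C)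
    {x y : ℂ} (hx : 0 < x.re) (hy : 0 < y.re) (σ : ℝ) :
    DifferentiableAt ℂ (fun y' => f (x + σ * I) (y' - σ * I)) y :=
  ((hf.differentiableOn_right _ (show 0 < (x + σ * I).re by simpa using hx)).differentiableAt
    (isOpen_rightHalfPlane.mem_nhds (show 0 < (y - σ * I).re by simpa using hy))).comp y
    (differentiableAt_id.sub_const _)

theorem continuousOn_uncurry (hf : SeparatelyHolomorphicWithDecay f C) :
    ContinuousOn (↿f) (rightHalfPlane ×ˢ rightHalfPlane) :=
  continuousOn_uncurry_of_differentiableOn_left isOpen_rightHalfPlane isOpen_rightHalfPlane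
    hf.differentiableOn_left (fun z hz => (hf.differentiableOn_right z hz).continuousOn)
    (locallyBoundedOn_of_norm_le_div hf.norm_le)

theorem integrableOn_comp_path (hf : SeparatelyHolomorphicWithDecay f C) (hsp : 0 < sp.re)
    (hsm : 0 < sm.re) : IntegrableOn (fun σ : ℝ => f (sp + σ * I) (sm - σ * I)) (Ioi 0) := by
  obtain ⟨r, hr, B, hB⟩ := exists_norm_comp_path_le hf.norm_le hsp hsm
  exact (integrable_inv_one_add_sq.const_mul B).integrableOn.mono'
    (continuous_comp_path hf.continuousOn_uncurry hsp hsm).aestronglyMeasurable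
    (ae_of_all _ (hB sp (mem_ball_self hr) sm (mem_ball_self hr)).2.2)

theorem hasDerivAt_comp_path (hf : SeparatelyHolomorphicWithDecay f C) (hsp : 0 < sp.re)
    (hsm : 0 < sm.re) (σ₀ : ℝ) :
    HasDerivAt (fun σ : ℝ => f (sp + σ * I) (sm - σ * I))
      (I * deriv (f · (sm - σ₀ * I)) (sp + σ₀ * I) -
        I * deriv (f (sp + σ₀ * I)) (sm - σ₀ * I)) σ₀ := by
  have h := hasDerivAt_comp_line isOpen_rightHalfPlane isOpen_rightHalfPlane
    hf.differentiableOn_left hf.differentiableOn_right (locallyBoundedOn_of_norm_le_div hf.norm_le)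
    (u := I) (v := -I) (t₀ := σ₀) (show 0 < (sp + σ₀ * I).re by simpa using hsp)
    (show 0 < (sm + σ₀ * -I).re by simpa using hsm)
  simpa only [mul_neg, ← sub_eq_add_neg, smul_eq_mul, neg_mul] using h

theorem hasDerivAt_gOff_left (hf : SeparatelyHolomorphicWithDecay f C) (hsp : 0 < sp.re)
    (hsm : 0 < sm.re) :
    IntegrableOn (fun σ : ℝ => deriv (f · (sm - σ * I)) (sp + σ * I)) (Ioi 0) ∧
      HasDerivAt (fun z => gOff f z sm)
        (I * ∫ σ in Ioi (0 : ℝ), deriv (f · (sm - σ * I)) (sp + σ * I)) sp := by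
  obtain ⟨r, hr, B, hB⟩ := exists_norm_comp_path_le hf.norm_le hsp hsm
  have hderiv (σ : ℝ) : deriv (fun x => f (x + σ * I) (sm - σ * I)) sp =
      deriv (f · (sm - σ * I)) (sp + σ * I) := deriv_comp_add_const (f · (sm - σ * I)) _ _
  have hd₁ := continuousOn_uncurry_deriv_left isOpen_rightHalfPlane isOpen_rightHalfPlane
    hf.differentiableOn_left (fun z hz => (hf.differentiableOn_right z hz).continuousOn)
    (locallyBoundedOn_of_norm_le_div hf.norm_le)
  obtain ⟨hint, hderivAt⟩ := hasDerivAt_integral_of_differentiableOn_ball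
    (μ := volume.restrict (Ioi 0)) (G := fun x (σ : ℝ) => f (x + σ * I) (sm - σ * I)) hr
    (integrable_inv_one_add_sq.const_mul B).integrableOn
    (fun x hx => (continuous_comp_path hf.continuousOn_uncurry
      (hB x hx sm (mem_ball_self hr)).1 hsm).aestronglyMeasurable)
    (by simpa only [hderiv] using (continuous_comp_path hd₁ hsp hsm).aestronglyMeasurable)
    (fun σ x hx => (hf.differentiableAt_comp_path_left
      (hB x hx sm (mem_ball_self hr)).1 hsm σ).differentiableWithinAt)
    (fun σ x hx => (hB x hx sm (mem_ball_self hr)).2.2 σ)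
  simp only [hderiv] at hint hderivAt
  exact ⟨hint, hderivAt.const_mul I⟩

theorem hasDerivAt_gOff_right (hf : SeparatelyHolomorphicWithDecay f C) (hsp : 0 < sp.re)
    (hsm : 0 < sm.re) :
    IntegrableOn (fun σ : ℝ => deriv (f (sp + σ * I)) (sm - σ * I)) (Ioi 0) ∧
      HasDerivAt (fun w => gOff f sp w)
        (I * ∫ σ in Ioi (0 : ℝ), deriv (f (sp + σ * I)) (sm - σ * I)) sm := by
  obtain ⟨r, hr, B, hB⟩ := exists_norm_comp_path_le hf.norm_le hsp hsm
  have hderiv (σ : ℝ) : deriv (fun y => f (sp + σ * I) (y - σ * I)) sm =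
      deriv (f (sp + σ * I)) (sm - σ * I) := deriv_comp_sub_const (f (sp + σ * I)) _ _
  have hd₂ := continuousOn_uncurry_deriv_right isOpen_rightHalfPlane isOpen_rightHalfPlane
    (fun w hw => (hf.differentiableOn_left w hw).continuousOn) hf.differentiableOn_right
    (locallyBoundedOn_of_norm_le_div hf.norm_le)
  obtain ⟨hint, hderivAt⟩ := hasDerivAt_integral_of_differentiableOn_ball
    (μ := volume.restrict (Ioi 0)) (G := fun y (σ : ℝ) => f (sp + σ * I) (y - σ * I)) hr
    (integrable_inv_one_add_sq.const_mul B).integrableOn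
    (fun y hy => (continuous_comp_path hf.continuousOn_uncurry hsp
      (hB sp (mem_ball_self hr) y hy).2.1).aestronglyMeasurable)
    (by simpa only [hderiv] using (continuous_comp_path hd₂ hsp hsm).aestronglyMeasurable)
    (fun σ y hy => (hf.differentiableAt_comp_path_right hsp
      (hB sp (mem_ball_self hr) y hy).2.1 σ).differentiableWithinAt)
    (fun σ y hy => (hB sp (mem_ball_self hr) y hy).2.2 σ)
  simp only [hderiv] at hint hderivAt
  exact ⟨hint, hderivAt.const_mul I⟩

end SeparatelyHolomorphicWithDecay

end RightHalfPlane

theorem stmt5_general (f : ℂ → ℂ → ℂ) (C : ℝ)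
    (hol1 : ∀ sp sm : ℂ, 0 < sp.re → 0 < sm.re →
      DifferentiableAt ℂ (fun z => f z sm) sp)
    (hol2 : ∀ sp sm : ℂ, 0 < sp.re → 0 < sm.re →
      DifferentiableAt ℂ (fun z => f sp z) sm)
    (hbd : ∀ sp sm : ℂ, 0 < sp.re → 0 < sm.re →
      ‖f sp sm‖ ≤ C / (‖sp‖ ^ 2 * ‖sm‖ ^ 2)) :
    (∀ sp sm : ℂ, 0 < sp.re → 0 < sm.re →
      IntegrableOn
        (fun σ : ℝ => f (sp + (σ : ℂ) * Complex.I) (sm - (σ : ℂ) * Complex.I))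
        (Set.Ioi 0)) ∧
    (∀ sp sm : ℂ, 0 < sp.re → 0 < sm.re →
      DifferentiableAt ℂ (fun z => gOff f z sm) sp ∧
      DifferentiableAt ℂ (fun z => gOff f sp z) sm) ∧
    (∀ sp sm : ℂ, 0 < sp.re → 0 < sm.re →
      deriv (fun z => gOff f z sm) sp - deriv (fun z => gOff f sp z) sm = -f sp sm) := by
  have hf : SeparatelyHolomorphicWithDecay f C :=
    ⟨fun w hw z hz => (hol1 z w hz hw).differentiableWithinAt,
      fun z hz w hw => (hol2 z w hz hw).differentiableWithinAt, hbd⟩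
  refine ⟨fun sp sm hsp hsm => hf.integrableOn_comp_path hsp hsm,
    fun sp sm hsp hsm => ⟨(hf.hasDerivAt_gOff_left hsp hsm).2.differentiableAt,
      (hf.hasDerivAt_gOff_right hsp hsm).2.differentiableAt⟩, fun sp sm hsp hsm => ?_⟩
  obtain ⟨hint₁, hderiv₁⟩ := hf.hasDerivAt_gOff_left hsp hsm
  obtain ⟨hint₂, hderiv₂⟩ := hf.hasDerivAt_gOff_right hsp hsm
  have hint := (hint₁.const_mul Complex.I).sub (hint₂.const_mul Complex.I)
  have hftc := integral_Ioi_of_hasDerivAt_of_tendsto'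
    (fun σ _ => hf.hasDerivAt_comp_path hsp hsm σ) hint (tendsto_comp_path_atTop hbd hsp hsm)
  rw [hderiv₁.deriv, hderiv₂.deriv, ← integral_const_mul, ← integral_const_mul,
    ← integral_sub (hint₁.const_mul Complex.I) (hint₂.const_mul Complex.I), hftc]
  simp

theorem stmt5 (f : ℂ → ℂ → ℂ) (C : ℝ) (hC : 0 < C)
    (hol1 : ∀ sp sm : ℂ, 0 < sp.re → 0 < sm.re →
      DifferentiableAt ℂ (fun z => f z sm) sp)
    (hol2 : ∀ sp sm : ℂ, 0 < sp.re → 0 < sm.re →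
      DifferentiableAt ℂ (fun z => f sp z) sm)
    (hbd : ∀ sp sm : ℂ, 0 < sp.re → 0 < sm.re →
      ‖f sp sm‖ ≤ C / (‖sp‖ ^ 2 * ‖sm‖ ^ 2)) :
    (∀ sp sm : ℂ, 0 < sp.re → 0 < sm.re →
      IntegrableOn
        (fun σ : ℝ => f (sp + (σ : ℂ) * Complex.I) (sm - (σ : ℂ) * Complex.I))
        (Set.Ioi 0)) ∧
    (∀ sp sm : ℂ, 0 < sp.re → 0 < sm.re →
      DifferentiableAt ℂ (fun z => gOff f z sm) sp ∧
      DifferentiableAt ℂ (fun z => gOff f sp z) sm) ∧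
    (∀ sp sm : ℂ, 0 < sp.re → 0 < sm.re →
      deriv (fun z => gOff f z sm) sp - deriv (fun z => gOff f sp z) sm = -f sp sm) :=
  stmt5_general f C hol1 hol2 hbd
end

section
/- Let w ∈ ℂ with w ≠ 0. Then, as x → 0 in ℂ with x ≠ 0, the function x ↦ (1/x²) · ( 1 + (w/(2x)) · Log((w − x)/(w + x)) ) tends to −1/(3 w²), where Log is the principal branch of the complex logarithm. -/
/-!
With `u = x / w` the expression equals `-(S u - u) / (w ^ 2 u ^ 3)`, where
`S u = -log ((1 - u) / (1 + u)) / 2 = ∑ u ^ (2n+1) / (2n+1)` is the series of `artanh`, obtained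
from the arctangent series at `I * u`. Comparing the tail beyond `u + u ^ 3 / 3` with a geometric
series gives `(S u - u) / u ^ 3 → 1 / 3`.
-/

open Filter Topology

namespace Complex

theorem hasSum_log_one_sub_div_one_add {u : ℂ} (hu : ‖u‖ < 1) :
    HasSum (fun n : ℕ => u ^ (2 * n + 1) / ↑(2 * n + 1)) (-log ((1 - u) / (1 + u)) / 2) := by
  have hterm (n : ℕ) : -I * ((-1) ^ n * (I * u) ^ (2 * n + 1) / ↑(2 * n + 1)) =
      u ^ (2 * n + 1) / ↑(2 * n + 1) := by
    have hsq : ((-1 : ℂ) ^ n) ^ 2 = 1 := by rw [← pow_mul, pow_mul']; norm_num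
    rw [mul_pow, pow_succ, pow_mul, I_sq]
    linear_combination (-(u ^ (2 * n + 1) / ↑(2 * n + 1)) * ((-1 : ℂ) ^ n) ^ 2) * I_sq
      + (u ^ (2 * n + 1) / ↑(2 * n + 1)) * hsq
  have hval : -I * arctan (I * u) = -log ((1 - u) / (1 + u)) / 2 := by
    have hIuI : I * u * I = -u := by ring_nf; rw [I_sq]; ring
    unfold arctan
    rw [hIuI, ← sub_eq_add_neg, sub_neg_eq_add]
    ring_nf
    rw [I_sq]
    ring
  have h := (hasSum_arctan (z := I * u) (by simpa using hu)).mul_left (-I)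
  simpa only [hterm, hval] using h

theorem norm_log_one_sub_div_one_add_sub_le {u : ℂ} (hu : ‖u‖ < 1) :
    ‖-log ((1 - u) / (1 + u)) / 2 - u - u ^ 3 / 3‖ ≤ ‖u‖ ^ 5 / (1 - ‖u‖ ^ 2) := by
  have tail : HasSum (fun n : ℕ => u ^ (2 * (n + 2) + 1) / ↑(2 * (n + 2) + 1))
      (-log ((1 - u) / (1 + u)) / 2 - u - u ^ 3 / 3) := by
    have h := (hasSum_nat_add_iff' 2).mpr (hasSum_log_one_sub_div_one_add hu)
    rwa [show ∑ i ∈ Finset.range 2, u ^ (2 * i + 1) / ↑(2 * i + 1) = u + u ^ 3 / 3 by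
      norm_num [Finset.sum_range_succ], ← sub_sub] at h
  have geom := (hasSum_geometric_of_lt_one (r := ‖u‖ ^ 2) (by positivity)
    (by nlinarith [norm_nonneg u])).mul_left (‖u‖ ^ 5)
  refine tail.norm_le_of_bounded geom fun n => ?_
  have hk : (1 : ℝ) ≤ ‖((2 * (n + 2) + 1 : ℕ) : ℂ)‖ := by
    rw [norm_natCast]; exact_mod_cast Nat.succ_pos _
  calc ‖u ^ (2 * (n + 2) + 1) / ((2 * (n + 2) + 1 : ℕ) : ℂ)‖
      ≤ ‖u‖ ^ (2 * (n + 2) + 1) := by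
        rw [norm_div, norm_pow]; exact div_le_self (by positivity) hk
    _ = ‖u‖ ^ 5 * (‖u‖ ^ 2) ^ n := by ring

theorem tendsto_log_one_sub_div_one_add_sub_div_pow_three :
    Tendsto (fun u : ℂ => (-log ((1 - u) / (1 + u)) / 2 - u) / u ^ 3) (𝓝[≠] 0) (𝓝 (1 / 3)) := by
  rw [← tendsto_sub_nhds_zero_iff]
  have hbound : ∀ᶠ u in 𝓝[≠] (0 : ℂ),
      ‖(-log ((1 - u) / (1 + u)) / 2 - u) / u ^ 3 - 1 / 3‖ ≤ ‖u‖ ^ 2 / (1 - ‖u‖ ^ 2) := by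
    filter_upwards [self_mem_nhdsWithin,
      nhdsWithin_le_nhds (Metric.ball_mem_nhds (0 : ℂ) one_pos)] with u (hu0 : u ≠ 0) hu1
    rw [mem_ball_zero_iff] at hu1
    calc ‖(-log ((1 - u) / (1 + u)) / 2 - u) / u ^ 3 - 1 / 3‖
        = ‖-log ((1 - u) / (1 + u)) / 2 - u - u ^ 3 / 3‖ / ‖u‖ ^ 3 := by
          rw [← norm_pow, ← norm_div]; congr 1; field_simp
      _ ≤ ‖u‖ ^ 5 / (1 - ‖u‖ ^ 2) / ‖u‖ ^ 3 := by
          gcongr; exact norm_log_one_sub_div_one_add_sub_le hu1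
      _ = ‖u‖ ^ 2 / (1 - ‖u‖ ^ 2) := by field_simp
  have hlim : Tendsto (fun u : ℂ => ‖u‖ ^ 2 / (1 - ‖u‖ ^ 2)) (𝓝[≠] 0) (𝓝 0) := by
    have : ContinuousAt (fun u : ℂ => ‖u‖ ^ 2 / (1 - ‖u‖ ^ 2)) 0 :=
      ContinuousAt.div (by fun_prop) (by fun_prop) (by simp)
    simpa using this.tendsto.mono_left nhdsWithin_le_nhds
  exact squeeze_zero_norm' hbound hlim

end Complex

theorem stmt13 (w : ℂ) (hw : w ≠ 0) :
    Filter.Tendsto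
      (fun x : ℂ => (1 / x ^ 2) * (1 + (w / (2 * x)) * Complex.log ((w - x) / (w + x))))
      (nhdsWithin 0 {(0 : ℂ)}ᶜ) (nhds (-1 / (3 * w ^ 2))) := by
  have hscale : Tendsto (fun x : ℂ => x / w) (𝓝[≠] 0) (𝓝[≠] 0) := by
    refine tendsto_nhdsWithin_iff.mpr ⟨?_, ?_⟩
    · simpa using (continuous_id.div_const w).tendsto (0 : ℂ) |>.mono_left nhdsWithin_le_nhds
    · filter_upwards [self_mem_nhdsWithin] with x hx using div_ne_zero hx hw
  have hlim := (Complex.tendsto_log_one_sub_div_one_add_sub_div_pow_three.comp hscale).const_mul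
    (-1 / w ^ 2)
  rw [show -1 / w ^ 2 * (1 / 3) = -1 / (3 * w ^ 2) by ring] at hlim
  refine hlim.congr' ?_
  filter_upwards [self_mem_nhdsWithin] with x (hx : x ≠ 0)
  have hquot : (1 - x / w) / (1 + x / w) = (w - x) / (w + x) := by
    rw [one_sub_div hw, one_add_div hw, div_div_div_cancel_right₀ hw]
  simp only [Function.comp_apply, hquot]
  field_simp
  ring
end
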